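/- Let j1, j2, j3, j4 be integers with j1 = -1, j1 + j2 - j3 - j4 = 2, and j1² + j2² - j3² - j4² = 0. Then (j1, j2, j3, j4) is one of (-1,1,-1,-1), (-1,2,-2,1), (-1,2,1,-2), (-1,-8,-4,-7), (-1,-8,-7,-4), (-1,-7,-5,-5). -/

import Mathlib

/-! Solving the momentum condition for `j2` turns the resonance condition into
`(j3 + 3) * (j4 + 3) = 4`, so the six solutions are the six factorizations of `4` in `ℤ`. -/

lemma resonance_eq_of_momentum {j2 j3 j4 : ℤ} (hmom : -1 + j2 - j3 - j4 = 2) :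
    (-1) ^ 2 + j2 ^ 2 - j3 ^ 2 - j4 ^ 2 = 2 * ((j3 + 3) * (j4 + 3) - 4) := by
  obtain rfl : j2 = j3 + j4 + 3 := by linarith
  ring

theorem stmt2 (j1 j2 j3 j4 : ℤ) (h1 : j1 = -1)
    (hmom : j1 + j2 - j3 - j4 = 2) (hres : j1^2 + j2^2 - j3^2 - j4^2 = 0) :
    (j1, j2, j3, j4) = (-1, 1, -1, -1) ∨ (j1, j2, j3, j4) = (-1, 2, -2, 1) ∨
    (j1, j2, j3, j4) = (-1, 2, 1, -2) ∨ (j1, j2, j3, j4) = (-1, -8, -4, -7) ∨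
    (j1, j2, j3, j4) = (-1, -8, -7, -4) ∨ (j1, j2, j3, j4) = (-1, -7, -5, -5) := by
  subst h1
  have hprod : (j3 + 3) * (j4 + 3) = 4 := by
    linarith [resonance_eq_of_momentum hmom]
  have hfactor : (j3 + 3, j4 + 3) ∈ Int.divisorsAntidiag 4 :=
    (Int.prodMk_mem_divisorsAntidiag four_ne_zero).2 hprod
  obtain rfl : j2 = j3 + j4 + 3 := by linarith
  simp only [Int.divisorsAntidiagonal_four, Finset.mem_insert, Finset.mem_singleton,
    Prod.mk.injEq] at hfactor
  rcases hfactor with ⟨h3, h4⟩ | ⟨h3, h4⟩ | ⟨h3, h4⟩ | ⟨h3, h4⟩ | ⟨h3, h4⟩ | ⟨h3, h4⟩ <;>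
    · rw [eq_sub_of_add_eq h3, eq_sub_of_add_eq h4]
      norm_num
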